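/- Let X be a finite topological T₀-space. Then there exists a non-trivial semiflow φ : ℝ≥0 × X → X on X if and only if X has at least one down beat point. -/

import Mathlib

open NNReal Topology Filter

/-- A semiflow on a topological space `X`: a jointly continuous map
`φ : ℝ≥0 × X → X` with `φ 0 x = x` and `φ s (φ t x) = φ (s + t) x`. -/
def IsSemiflow {X : Type*} [TopologicalSpace X] (φ : ℝ≥0 → X → X) : Prop :=
  Continuous (fun p : ℝ≥0 × X => φ p.1 p.2) ∧
  (∀ x : X, φ 0 x = x) ∧
  ∀ (s t : ℝ≥0) (x : X), φ s (φ t x) = φ (s + t) x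

/-- A semiflow is trivial if every time-`t` map is the identity. -/
def IsTrivialSemiflow {X : Type*} [TopologicalSpace X] (φ : ℝ≥0 → X → X) : Prop :=
  ∀ (t : ℝ≥0) (x : X), φ t x = x

/-- `x` is a down beat point: `U_x \ {x}` has a greatest element in the
specialization order (`y ⤳ x` means `y ≤ x`, i.e. `y ∈ U_x`). -/
def IsDownBeatPoint {X : Type*} [TopologicalSpace X] (x : X) : Prop :=
  ∃ m : X, (m ⤳ x ∧ m ≠ x) ∧ ∀ y : X, y ⤳ x → y ≠ x → y ⤳ m

/-- `x` is an up beat point: `F_x \ {x}` has a least element in the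
specialization order. -/
def IsUpBeatPoint {X : Type*} [TopologicalSpace X] (x : X) : Prop :=
  ∃ m : X, (x ⤳ m ∧ m ≠ x) ∧ ∀ y : X, x ⤳ y → y ≠ x → m ⤳ y

/-!
Continuity at time `0`, together with the openness of the minimal open sets `U_x`, yields a time
`t > 0` with `φ t x ∈ U_x` for all `x`, which can be chosen with `φ t ≠ id` because the semigroup
law spreads triviality on `[0, ε)` to all times. A point `x` minimal among those moved by `φ t` is a
down beat point: every `y < x` is fixed, so `y = φ t y ≤ φ t x < x` by monotonicity of `φ t`.
Conversely, collapsing a down beat point `x` onto the maximum `m` of `U_x \ {x}` is a continuous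
retraction `r` with `r y ≤ y`, and this inequality is exactly what makes `φ 0 = id`, `φ t = r`
(`t > 0`) jointly continuous.
-/

section AlexandrovDiscrete

variable {X Y α : Type*} [TopologicalSpace X] [TopologicalSpace Y] [AlexandrovDiscrete X]

lemma Filter.Tendsto.eventually_specializes {l : Filter α} {f : α → X} {x : X}
    (hf : Tendsto f l (𝓝 x)) : ∀ᶠ a in l, f a ⤳ x := by
  rw [← principal_nhdsKer_singleton, tendsto_principal] at hf
  exact hf.mono fun _ => mem_nhdsKer_singleton.1

lemma continuous_of_forall_specializes {f : X → Y} (hf : ∀ x y, x ⤳ y → f x ⤳ f y) :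
    Continuous f :=
  continuous_def.2 fun _ hU =>
    isOpen_iff_forall_specializes.2 fun x y hxy hy => (hf x y hxy).mem_open hU hy

end AlexandrovDiscrete

lemma forall_apply_eq_self_of_eventually_nhds_zero {X : Type*} {φ : ℝ≥0 → X → X}
    (h0 : ∀ x, φ 0 x = x) (hadd : ∀ s t x, φ s (φ t x) = φ (s + t) x)
    (h : ∀ᶠ t in 𝓝 0, ∀ x, φ t x = x) : ∀ t x, φ t x = x := by
  intro t
  have hnsmul : ∀ u, (∀ x, φ u x = x) → ∀ (n : ℕ) x, φ (n • u) x = x := by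
    intro u hu n
    induction n with
    | zero => simpa using h0
    | succ n ih => intro x; rw [succ_nsmul, ← hadd, hu, ih]
  have hdiv := tendsto_const_div_atTop_nhds_zero_nat (𝕜 := ℝ≥0) t
  obtain ⟨n, hn, hn0⟩ := (hdiv.eventually h).and (eventually_ne_atTop 0) |>.exists
  simpa [nsmul_eq_mul, mul_div_cancel₀ t (Nat.cast_ne_zero.2 hn0 : (n : ℝ≥0) ≠ 0)]
    using hnsmul _ hn n

section

variable {X : Type*} [TopologicalSpace X]

lemma exists_minimal_specializes [Finite X] [T0Space X] {p : X → Prop}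
    (h : ∃ x, p x) : ∃ x, p x ∧ ∀ y, y ⤳ x → p y → y = x := by
  -- Mathlib's specialization preorder is `x ≤ y ↔ y ⤳ x`, so we look for a maximal element.
  let := specializationPreorder X
  obtain ⟨x, hx⟩ := exists_maximal_of_wellFoundedGT p h
  exact ⟨x, hx.1, fun y hyx hy => (hyx.antisymm (hx.2 hy hyx)).eq⟩

lemma isDownBeatPoint_of_continuous {f : X → X} (hf : Continuous f) {x : X} (hfx : f x ⤳ x)
    (hne : f x ≠ x) (hfix : ∀ y, y ⤳ x → y ≠ x → f y = y) : IsDownBeatPoint x :=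
  ⟨f x, ⟨hfx, hne⟩, fun y hyx hy => hfix y hyx hy ▸ hyx.map hf⟩

lemma exists_isDownBeatPoint_of_continuous [Finite X] [T0Space X] {f : X → X}
    (hf : Continuous f) (hfx : ∀ x, f x ⤳ x) (hne : ∃ x, f x ≠ x) :
    ∃ x : X, IsDownBeatPoint x := by
  obtain ⟨x, hx, hmin⟩ := exists_minimal_specializes hne
  refine ⟨x, isDownBeatPoint_of_continuous hf (hfx x) hx fun y hyx hy => ?_⟩
  exact not_not.1 (mt (hmin y hyx) hy)

lemma IsSemiflow.eventually_specializes [Finite X] {φ : ℝ≥0 → X → X} (hφ : IsSemiflow φ) :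
    ∀ᶠ t in 𝓝 0, ∀ x, φ t x ⤳ x :=
  eventually_all.2 fun x => by
    simpa [hφ.2.1] using ((hφ.1.comp (Continuous.prodMk_left x)).tendsto 0).eventually_specializes

lemma IsSemiflow.frequently_ne {φ : ℝ≥0 → X → X} (hφ : IsSemiflow φ)
    (hnt : ¬ IsTrivialSemiflow φ) : ∃ᶠ t in 𝓝 0, ∃ x, φ t x ≠ x := by
  refine fun h => hnt (forall_apply_eq_self_of_eventually_nhds_zero hφ.2.1 hφ.2.2 ?_)
  simpa using h

lemma isSemiflow_ite_zero {r : X → X} (hr : Continuous r) (hidem : ∀ x, r (r x) = r x)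
    (hspec : ∀ x, r x ⤳ x) : IsSemiflow fun t => if t = 0 then id else r := by
  refine ⟨?_, fun x => by simp, fun s t x => ?_⟩
  · have hpos : IsOpen {p : ℝ≥0 × X | p.1 ≠ 0} := isOpen_ne_fun continuous_fst continuous_const
    convert hpos.continuous_piecewise_of_specializes (hr.comp continuous_snd) continuous_snd
      fun p => hspec p.2 using 1
    ext ⟨t, x⟩
    by_cases ht : t = 0 <;> simp [ht]
  · rcases eq_or_ne s 0 with rfl | hs
    · simp
    rcases eq_or_ne t 0 with rfl | ht
    · simp
    simp [hs, ht, hidem]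

lemma continuous_update_id [AlexandrovDiscrete X] [DecidableEq X] {x m : X} (hm : m ⤳ x)
    (hmax : ∀ y, y ⤳ x → y ≠ x → y ⤳ m) : Continuous (Function.update id x m) := by
  refine continuous_of_forall_specializes fun y z hyz => ?_
  by_cases hz : z = x <;> by_cases hy : y = x <;> subst_vars
  · rfl
  · simpa [hy] using hmax y hyz hy
  · simpa [hz] using hm.trans hyz
  · simpa [hy, hz] using hyz

end

/-- A finite `T₀`-space admits a non-trivial semiflow if and only if it has a
down beat point. -/
theorem exists_nontrivial_semiflow_iff {X : Type*} [TopologicalSpace X] [Finite X]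
    [T0Space X] :
    (∃ φ : ℝ≥0 → X → X, IsSemiflow φ ∧ ¬ IsTrivialSemiflow φ) ↔
      ∃ x : X, IsDownBeatPoint x := by
  classical
  constructor
  · rintro ⟨φ, hφ, hnt⟩
    obtain ⟨t, hne, hspec⟩ := (hφ.frequently_ne hnt).and_eventually hφ.eventually_specializes
      |>.exists
    exact exists_isDownBeatPoint_of_continuous (hφ.1.comp (.prodMk_right t)) hspec hne
  · rintro ⟨x, m, ⟨hm, hmx⟩, hmax⟩
    set r := Function.update id x m
    have hidem : ∀ y, r (r y) = r y := fun y => by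
      rcases eq_or_ne y x with rfl | hy <;> simp [r, *]
    have hspec : ∀ y, r y ⤳ y := fun y => by
      rcases eq_or_ne y x with rfl | hy <;> simp [r, specializes_rfl, *]
    refine ⟨_, isSemiflow_ite_zero (continuous_update_id hm hmax) hidem hspec, fun h => hmx ?_⟩
    simpa [r] using h 1 x
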